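/- For every integer p ≥ 0, ∑_{q=1}^∞ ( ∑_{(s_1,…,s_q) ∈ ℕ^q with s_1+⋯+s_q = p} θ̄(s_1)·θ(s_2)⋯θ(s_q) ) = 1, where θ̄(s) := ∑_{j=s+1}^∞ θ(j) and for each q the inner sum runs over all q-tuples of nonnegative integers summing to p. -/

import Mathlib

/-- The critical offspring distribution: θ(k) = 3·(2k−1)!! / (2^{k+1}·(k+2)!),
with (2k−1)!! read as 1 when k = 0 (natural subtraction gives 0!! = 1). -/
noncomputable def theta (k : ℕ) : ℝ :=
  3 * (Nat.doubleFactorial (2 * k - 1) : ℝ) / (2 ^ (k + 1) * (Nat.factorial (k + 2) : ℝ))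

/-- The strict tail θ̄(s) = ∑_{j=s+1}^∞ θ(j). -/
noncomputable def thetaBar (s : ℕ) : ℝ := ∑' j : ℕ, theta (s + 1 + j)

/-! If `f` is a probability distribution on `ℕ` with generating function `F = ∑ f k X^k`, the
strict tails have generating function `B = (1 - F) / (1 - X)`, and the `q`-th summand is the
coefficient of `X^p` in `B * F^q`. The partial sums telescope: `∑_{q<Q} B F^q = (1 - F^Q) / (1 - X)`,
whose coefficient of `X^p` is `1 - P(S_Q ≤ p)` for the random walk `S` with `f`-distributed steps.
A Chernoff bound `P(S_Q ≤ p) ≤ 2^p (∑_{k ≤ p} f k / 2^k)^Q` makes this tend to `0` once `f 0 < 1`.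
For `θ`, the tail `∑_{j ≥ k} θ j` equals `(2k-1)!! / (2^k (k+1)!) ≤ 1 / (k+1)`, so `θ` is a probability
distribution, and `θ 0 = 3/4`. -/

open Finset PowerSeries Filter Topology
open scoped Nat

theorem Finset.Nat.sum_antidiagonalTuple_succ {M : Type*} [AddCommMonoid M] (q n : ℕ)
    (g : (Fin (q + 1) → ℕ) → M) :
    ∑ t ∈ Nat.antidiagonalTuple (q + 1) n, g t =
      ∑ x ∈ antidiagonal n, ∑ t ∈ Nat.antidiagonalTuple q x.2, g (Fin.cons x.1 t) := by
  rw [sum_sigma']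
  refine sum_nbij' (fun t => ⟨(t 0, ∑ i, Fin.tail t i), Fin.tail t⟩) (fun x => Fin.cons x.1.1 x.2)
    ?_ ?_ (fun t _ => Fin.cons_self_tail t) ?_ (fun t _ => by rw [Fin.cons_self_tail])
  · intro t ht
    rw [Nat.mem_antidiagonalTuple] at ht
    rw [mem_sigma, HasAntidiagonal.mem_antidiagonal, Nat.mem_antidiagonalTuple,
      ← ht, Fin.sum_univ_succ]
    exact ⟨rfl, rfl⟩
  · rintro ⟨⟨a, c⟩, t⟩ ht
    rw [mem_sigma, HasAntidiagonal.mem_antidiagonal, Nat.mem_antidiagonalTuple] at ht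
    rw [Nat.mem_antidiagonalTuple, Fin.sum_cons, ht.2, ht.1]
  · rintro ⟨⟨a, c⟩, t⟩ ht
    rw [mem_sigma, Nat.mem_antidiagonalTuple] at ht
    simp [ht.2]

theorem Fin.prod_univ_erase_zero {M : Type*} [CommMonoid M] {q : ℕ} (g : Fin (q + 1) → M) :
    ∏ i ∈ univ.erase 0, g i = ∏ i : Fin q, g i.succ := by
  rw [Fin.univ_succ, erase_cons, prod_map]
  rfl

namespace PowerSeries

variable {R : Type*} [CommSemiring R]

theorem coeff_mk_pow (f : ℕ → R) (q n : ℕ) :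
    coeff n (mk f ^ q) = ∑ t ∈ Finset.Nat.antidiagonalTuple q n, ∏ i, f (t i) := by
  induction q generalizing n with
  | zero => cases n <;> simp [Finset.Nat.antidiagonalTuple_zero_succ]
  | succ q ih =>
    simp only [pow_succ', coeff_mul, Finset.Nat.sum_antidiagonalTuple_succ, ih, coeff_mk,
      mul_sum, Fin.prod_univ_succ, Fin.cons_zero, Fin.cons_succ]

theorem coeff_mk_mul_mk_pow (g f : ℕ → R) (q n : ℕ) :
    coeff n (mk g * mk f ^ q) =
      ∑ s ∈ Finset.Nat.antidiagonalTuple (q + 1) n, g (s 0) * ∏ i ∈ univ.erase 0, f (s i) := by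
  simp only [coeff_mul, Finset.Nat.sum_antidiagonalTuple_succ, coeff_mk_pow, coeff_mk, mul_sum,
    Fin.prod_univ_erase_zero, Fin.cons_zero, Fin.cons_succ]

end PowerSeries

section Overshoot

variable {f : ℕ → ℝ}

theorem PowerSeries.mk_tsum_tail (hf : HasSum f 1) :
    mk (fun s => ∑' j, f (s + 1 + j)) = mk 1 * (1 - mk f) := by
  ext s
  have htail : HasSum (fun j => f (s + 1 + j)) (1 - ∑ k ∈ range (s + 1), f k) := by
    simpa only [add_comm (s + 1)] using (hasSum_nat_add_iff' (s + 1)).2 hf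
  rw [coeff_mk, htail.tsum_eq, mul_comm, coeff_mul, Nat.sum_antidiagonal_eq_sum_range_succ_mk]
  simp [sum_sub_distrib]

theorem sum_range_coeff_tail_mul_pow (hf : HasSum f 1) (p Q : ℕ) :
    ∑ q ∈ range Q, coeff p (mk (fun s => ∑' j, f (s + 1 + j)) * mk f ^ q) =
      1 - ∑ b ∈ range (p + 1), coeff b (mk f ^ Q) := by
  rw [← map_sum, ← mul_sum, PowerSeries.mk_tsum_tail hf, mul_assoc, mul_neg_geom_sum, mul_sub,
    mul_one, map_sub, mul_comm, coeff_mul, Nat.sum_antidiagonal_eq_sum_range_succ_mk]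
  simp

theorem pow_mul_sum_range_coeff_mk_pow_le (hf : ∀ k, 0 ≤ f k) {x : ℝ} (hx₀ : 0 ≤ x) (hx₁ : x ≤ 1)
    (p Q : ℕ) :
    x ^ p * ∑ b ∈ range (p + 1), coeff b (mk f ^ Q) ≤
      (∑ k ∈ range (p + 1), f k * x ^ k) ^ Q := by
  set w : (Fin Q → ℕ) → ℝ := fun t => ∏ i, f (t i) * x ^ t i
  have hw : ∀ t, 0 ≤ w t := fun t => prod_nonneg fun i _ => mul_nonneg (hf _) (pow_nonneg hx₀ _)
  have hdisj : (range (p + 1) : Set ℕ).PairwiseDisjoint (Nat.antidiagonalTuple Q) :=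
    fun b _ c _ hbc => disjoint_left.2 fun t hb hc => hbc <|
      (Nat.mem_antidiagonalTuple.1 hb).symm.trans (Nat.mem_antidiagonalTuple.1 hc)
  have hsub : (range (p + 1)).biUnion (Nat.antidiagonalTuple Q) ⊆
      Fintype.piFinset fun _ => range (p + 1) := by
    intro t ht
    obtain ⟨b, hb, ht⟩ := mem_biUnion.1 ht
    rw [Nat.mem_antidiagonalTuple] at ht
    refine Fintype.mem_piFinset.2 fun i => mem_range.2 ?_
    have := single_le_sum (fun j _ => Nat.zero_le (t j)) (mem_univ i)
    have := mem_range.1 hb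
    omega
  calc x ^ p * ∑ b ∈ range (p + 1), coeff b (mk f ^ Q)
      ≤ ∑ b ∈ range (p + 1), ∑ t ∈ Nat.antidiagonalTuple Q b, w t := by
        rw [mul_sum]
        refine sum_le_sum fun b hb => ?_
        rw [coeff_mk_pow, mul_sum]
        refine sum_le_sum fun t ht => ?_
        rw [Nat.mem_antidiagonalTuple] at ht
        have hxb : x ^ p ≤ x ^ b := pow_le_pow_of_le_one hx₀ hx₁ (Nat.lt_succ_iff.1 (mem_range.1 hb))
        simp only [w, prod_mul_distrib, prod_pow_eq_pow_sum, ht]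
        rw [mul_comm]
        exact mul_le_mul_of_nonneg_left hxb (prod_nonneg fun i _ => hf _)
    _ = ∑ t ∈ (range (p + 1)).biUnion (Nat.antidiagonalTuple Q), w t := (sum_biUnion hdisj).symm
    _ ≤ ∑ t ∈ Fintype.piFinset fun _ => range (p + 1), w t :=
        sum_le_sum_of_subset_of_nonneg hsub fun t _ _ => hw t
    _ = (∑ k ∈ range (p + 1), f k * x ^ k) ^ Q := by
        rw [← Fin.prod_const, prod_univ_sum]

theorem sum_range_mul_pow_le (hf : ∀ k, 0 ≤ f k) (h1 : HasSum f 1) {x : ℝ} (hx₀ : 0 ≤ x)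
    (hx₁ : x ≤ 1) (n : ℕ) :
    ∑ k ∈ range (n + 1), f k * x ^ k ≤ f 0 + x * (1 - f 0) := by
  have hsum : ∑ k ∈ range n, f (k + 1) ≤ 1 - f 0 := by
    have := sum_le_hasSum (range (n + 1)) (fun k _ => hf k) h1
    rw [sum_range_succ'] at this
    linarith
  rw [sum_range_succ', pow_zero, mul_one, add_comm]
  gcongr
  calc ∑ k ∈ range n, f (k + 1) * x ^ (k + 1)
      ≤ ∑ k ∈ range n, x * f (k + 1) := sum_le_sum fun k _ => by
        rw [pow_succ, ← mul_assoc, mul_comm]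
        exact mul_le_mul_of_nonneg_left (mul_le_of_le_one_right (hf _) (pow_le_one₀ hx₀ hx₁)) hx₀
    _ ≤ x * (1 - f 0) := by rw [← mul_sum]; exact mul_le_mul_of_nonneg_left hsum hx₀

theorem tendsto_sum_range_coeff_mk_pow (hf : ∀ k, 0 ≤ f k) (h1 : HasSum f 1) (h0 : f 0 < 1)
    (p : ℕ) : Tendsto (fun Q => ∑ b ∈ range (p + 1), coeff b (mk f ^ Q)) atTop (𝓝 0) := by
  set r := ∑ k ∈ range (p + 1), f k * (1 / 2 : ℝ) ^ k
  have hr₀ : 0 ≤ r := sum_nonneg fun k _ => by have := hf k; positivity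
  have hr₁ : r < 1 := by
    have := sum_range_mul_pow_le hf h1 (x := 1 / 2) (by norm_num) (by norm_num) p
    linarith
  have hle : ∀ Q, ∑ b ∈ range (p + 1), coeff b (mk f ^ Q) ≤ 2 ^ p * r ^ Q := fun Q =>
    calc ∑ b ∈ range (p + 1), coeff b (mk f ^ Q)
        = 2 ^ p * ((1 / 2) ^ p * ∑ b ∈ range (p + 1), coeff b (mk f ^ Q)) := by
          rw [← mul_assoc, ← mul_pow]; norm_num
      _ ≤ 2 ^ p * r ^ Q := mul_le_mul_of_nonneg_left
          (pow_mul_sum_range_coeff_mk_pow_le hf (by norm_num) (by norm_num) p Q) (by positivity)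
  have hnonneg : ∀ Q, 0 ≤ ∑ b ∈ range (p + 1), coeff b (mk f ^ Q) := fun Q =>
    sum_nonneg fun b _ => by
      rw [coeff_mk_pow]
      exact sum_nonneg fun t _ => prod_nonneg fun i _ => hf _
  refine squeeze_zero hnonneg hle ?_
  have := (tendsto_pow_atTop_nhds_zero_of_lt_one hr₀ hr₁).const_mul (2 ^ p : ℝ)
  rwa [mul_zero] at this

theorem hasSum_overshoot (hf : ∀ k, 0 ≤ f k) (h1 : HasSum f 1) (h0 : f 0 < 1) (p : ℕ) :
    HasSum (fun q => ∑ s ∈ Nat.antidiagonalTuple (q + 1) p,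
      (∑' j, f (s 0 + 1 + j)) * ∏ i ∈ univ.erase 0, f (s i)) 1 := by
  have hnonneg : ∀ q, 0 ≤ ∑ s ∈ Nat.antidiagonalTuple (q + 1) p,
      (∑' j, f (s 0 + 1 + j)) * ∏ i ∈ univ.erase 0, f (s i) := fun q =>
    sum_nonneg fun s _ => mul_nonneg (tsum_nonneg fun j => hf _) (prod_nonneg fun i _ => hf _)
  rw [hasSum_iff_tendsto_nat_of_nonneg hnonneg]
  simp_rw [← coeff_mk_mul_mk_pow (fun s => ∑' j, f (s + 1 + j)) f, sum_range_coeff_tail_mul_pow h1]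
  simpa using (tendsto_sum_range_coeff_mk_pow hf h1 h0 p).const_sub 1

end Overshoot

theorem Nat.doubleFactorial_two_mul_succ_sub_one (k : ℕ) :
    (2 * (k + 1) - 1)‼ = (2 * k + 1) * (2 * k - 1)‼ := by
  rw [show 2 * (k + 1) - 1 = 2 * k + 1 by omega, Nat.doubleFactorial_add_one]

theorem Nat.doubleFactorial_two_mul_sub_one_le (k : ℕ) : (2 * k - 1)‼ ≤ 2 ^ k * k ! := by
  induction k with
  | zero => rfl
  | succ k ih =>
    rw [Nat.doubleFactorial_two_mul_succ_sub_one, pow_succ, Nat.factorial_succ]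
    calc (2 * k + 1) * (2 * k - 1)‼ ≤ (2 * (k + 1)) * (2 ^ k * k !) := by gcongr; omega
      _ = 2 ^ k * 2 * ((k + 1) * k !) := by ring

noncomputable def thetaTail (k : ℕ) : ℝ := (2 * k - 1)‼ / (2 ^ k * (k + 1)! : ℝ)

theorem thetaTail_zero : thetaTail 0 = 1 := by simp [thetaTail]

theorem thetaTail_nonneg (k : ℕ) : 0 ≤ thetaTail k := by unfold thetaTail; positivity

theorem thetaTail_le (k : ℕ) : thetaTail k ≤ 1 / (k + 1) := by
  have h := Nat.doubleFactorial_two_mul_sub_one_le k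
  unfold thetaTail
  rw [div_le_div_iff₀ (by positivity) (by positivity), Nat.factorial_succ]
  push_cast
  have : ((2 * k - 1)‼ : ℝ) ≤ 2 ^ k * k ! := by exact_mod_cast h
  nlinarith

theorem tendsto_thetaTail : Tendsto thetaTail atTop (𝓝 0) :=
  squeeze_zero thetaTail_nonneg thetaTail_le tendsto_one_div_add_atTop_nhds_zero_nat

theorem theta_eq_thetaTail_sub (k : ℕ) : theta k = thetaTail k - thetaTail (k + 1) := by
  unfold theta thetaTail
  rw [Nat.doubleFactorial_two_mul_succ_sub_one, Nat.factorial_succ (k + 1)]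
  push_cast
  field_simp
  ring

theorem theta_nonneg (k : ℕ) : 0 ≤ theta k := by unfold theta; positivity

theorem theta_zero : theta 0 = 3 / 4 := by norm_num [theta]

theorem hasSum_theta : HasSum theta 1 := by
  rw [hasSum_iff_tendsto_nat_of_nonneg theta_nonneg]
  simp_rw [theta_eq_thetaTail_sub, sum_range_sub', thetaTail_zero]
  simpa using tendsto_thetaTail.const_sub 1

/-- For every p ≥ 0,
∑_{q=1}^∞ ( ∑_{s₁+⋯+s_q = p} θ̄(s₁)·θ(s₂)⋯θ(s_q) ) = 1,
where the inner sum is over q-tuples of nonnegative integers summing to p. -/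
theorem overshoot_identity (p : ℕ) :
    HasSum
      (fun q : ℕ =>
        ∑ s ∈ Finset.Nat.antidiagonalTuple (q + 1) p,
          thetaBar (s 0) * ∏ i ∈ Finset.univ.erase (0 : Fin (q + 1)), theta (s i))
      1 :=
  hasSum_overshoot theta_nonneg hasSum_theta (by norm_num [theta_zero]) p
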